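/- In a partial cube, the vertex set of every 4-cycle is gated. -/

import Mathlib

open SimpleGraph

namespace Mediangle

/-- The interval `[u,v]` in a graph: vertices on shortest `u,v`-paths. -/
def interval {V : Type*} (G : SimpleGraph V) (u v : V) : Set V :=
  {x | G.dist u x + G.dist x v = G.dist u v}

/-- A set of vertices is convex if it contains the interval between any two of its vertices. -/
def GConvex {V : Type*} (G : SimpleGraph V) (A : Set V) : Prop :=
  ∀ x ∈ A, ∀ y ∈ A, interval G x y ⊆ A

/-- A set `A` is gated: every vertex `u` has a gate `g ∈ A` with `g ∈ [u,v]` for all `v ∈ A`. -/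
def IsGated {V : Type*} (G : SimpleGraph V) (A : Set V) : Prop :=
  ∀ u : V, ∃ g ∈ A, ∀ v ∈ A, g ∈ interval G u v

/-- A set `A` is antipodal: every `v ∈ A` has an antipode `w` with `A = [v,w]`. -/
def IsAntipodalSet {V : Type*} (G : SimpleGraph V) (A : Set V) : Prop :=
  ∀ v ∈ A, ∃ w ∈ A, A = interval G v w

/-- A graph is antipodal if every vertex `v` has an antipode `w` with `V = [v,w]`. -/
def IsAntipodal {V : Type*} (G : SimpleGraph V) : Prop :=
  ∀ v : V, ∃ w : V, interval G v w = Set.univ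

/-- A convex cycle: a cycle whose vertex set is convex. -/
def ConvexCycle {V : Type*} (G : SimpleGraph V) {a : V} (c : G.Walk a a) : Prop :=
  c.IsCycle ∧ GConvex G {v | v ∈ c.support}

/-- Bipartite mediangle graph: connected, bipartite, satisfying the Cycle Condition and
the Intersection of Convex Cycles condition. -/
def IsMediangle {V : Type*} (G : SimpleGraph V) : Prop :=
  G.Connected ∧ G.Colorable 2 ∧
  (∀ u x y z : V, G.Adj z x → G.Adj z y → x ≠ y →
    G.dist u x + 1 = G.dist u z → G.dist u y + 1 = G.dist u z →
    ∃ c : G.Walk z z, ConvexCycle G c ∧ s(z, x) ∈ c.edges ∧ s(z, y) ∈ c.edges ∧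
      c.getVert (c.length / 2) ∈ interval G u x ∩ interval G u y) ∧
  (∀ (a b : V) (c₁ : G.Walk a a) (c₂ : G.Walk b b),
    ConvexCycle G c₁ → ConvexCycle G c₂ →
    {v | v ∈ c₁.support} ≠ {v | v ∈ c₂.support} →
    {e : Sym2 V | e ∈ c₁.edges ∧ e ∈ c₂.edges}.Subsingleton)

/-- A graph is apiculate if for every basepoint `u` and vertices `x, y` there is a unique
`⪯_u`-maximal vertex in `[u,x] ∩ [u,y]` (the `u`-apex relative to `x` and `y`). -/
def IsApiculate {V : Type*} (G : SimpleGraph V) : Prop :=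
  ∀ u x y : V, ∃! a : V,
    a ∈ interval G u x ∩ interval G u y ∧
      ∀ b ∈ interval G u x ∩ interval G u y, a ∈ interval G u b → a = b

/-- The hypercube graph on the finite subsets of `U`: two finite subsets are adjacent iff
their symmetric difference has exactly one element. -/
def cubeGraph (U : Type) : SimpleGraph (Finset U) where
  Adj A B := ∃ e : U, symmDiff (A : Set U) (B : Set U) = {e}
  symm := by
    constructor
    rintro A B ⟨e, h⟩
    exact ⟨e, by rwa [symmDiff_comm]⟩
  loopless := by
    constructor
    rintro A ⟨e, h⟩
    rw [symmDiff_self] at h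
    exact Set.singleton_ne_empty e (h.symm.trans Set.bot_eq_empty)

/-- A partial cube: a connected graph admitting an isometric embedding into a hypercube. -/
def IsPartialCube {V : Type*} (G : SimpleGraph V) : Prop :=
  G.Connected ∧ ∃ (U : Type) (φ : V → Finset U),
    ∀ u v : V, (cubeGraph U).dist (φ u) (φ v) = G.dist u v

/-! ### Sign vectors, COMs and OMs -/

/-- Sign vectors on a ground set `U`. -/
abbrev SignVec (U : Type*) := U → SignType

/-- Composition of sign vectors. -/
def sComp {U : Type*} (X Y : SignVec U) : SignVec U :=
  fun e => if X e ≠ 0 then X e else Y e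

/-- Separator of two sign vectors. -/
def sep {U : Type*} (X Y : SignVec U) : Set U := {e | X e * Y e = -1}

/-- A Complex of Oriented Matroids: a system of sign vectors satisfying strong elimination
(SE) and face symmetry (FS). -/
structure IsCOM {U : Type*} (L : Set (SignVec U)) : Prop where
  se : ∀ X ∈ L, ∀ Y ∈ L, ∀ e ∈ sep X Y,
        ∃ Z ∈ L, Z e = 0 ∧ ∀ f ∉ sep X Y, Z f = sComp X Y f
  fs : ∀ X ∈ L, ∀ Y ∈ L, sComp X (-Y) ∈ L

/-- A system of sign vectors is simple if every sign occurs in every coordinate. -/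
def SimpleSys {U : Type*} (L : Set (SignVec U)) : Prop :=
  ∀ (e : U) (s : SignType), ∃ X ∈ L, X e = s

/-- The topes of a simple system: covectors with full support. -/
def topes {U : Type*} (L : Set (SignVec U)) : Set (SignVec U) :=
  {X ∈ L | ∀ e, X e ≠ 0}

/-- The tope graph: vertices the topes, two topes adjacent iff their separator is a
singleton. -/
def topeGraph {U : Type*} (L : Set (SignVec U)) : SimpleGraph (topes L) where
  Adj X Y := ∃ e : U, sep X.1 Y.1 = {e}
  symm := by
    constructor
    rintro X Y ⟨e, h⟩
    refine ⟨e, ?_⟩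
    rw [← h]
    ext f
    simp only [sep, Set.mem_setOf_eq, mul_comm]
  loopless := by
    constructor
    rintro ⟨X, hX⟩ ⟨e, h⟩
    have he : X e * X e = -1 := by
      have : e ∈ sep X X := by rw [h]; exact Set.mem_singleton e
      exact this
    cases hxe : X e <;> rw [hxe] at he <;> exact absurd he (by decide)

/-- An oriented matroid: a COM containing the zero sign vector. -/
def IsOM {U : Type*} (L : Set (SignVec U)) : Prop :=
  IsCOM L ∧ (0 : SignVec U) ∈ L

/-- The partial order on sign vectors determined coordinatewise by `0 < -1` and `0 < +1`. -/
def signLE {U : Type*} (X Y : SignVec U) : Prop :=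
  ∀ e, X e = 0 ∨ X e = Y e

/-- `L` contains a strict chain with `n + 1` elements (i.e., of length `n`). -/
def HasChainOfLength {U : Type*} (L : Set (SignVec U)) (n : ℕ) : Prop :=
  ∃ c : Fin (n + 1) → SignVec U, (∀ i, c i ∈ L) ∧
    ∀ i j : Fin (n + 1), i < j → signLE (c i) (c j) ∧ c i ≠ c j

/-- `L` has rank `r`: the longest chain in `(L, ≤)` has length `r`. -/
def HasRank {U : Type*} (L : Set (SignVec U)) (r : ℕ) : Prop :=
  HasChainOfLength L r ∧ ∀ n : ℕ, HasChainOfLength L n → n ≤ r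

/-- A simplicial oriented matroid: an OM of rank `r` in which every tope has degree exactly
`r` in the tope graph. -/
def IsSimplicialOM {U : Type*} (L : Set (SignVec U)) : Prop :=
  IsOM L ∧ ∃ r : ℕ, HasRank L r ∧
    ∀ T ∈ topes L, {Y ∈ topes L | ∃ e : U, sep T Y = {e}}.ncard = r

/-- The imprint of a vertex `u` in a set `A`. -/
def imprint {V : Type*} (G : SimpleGraph V) (u : V) (A : Set V) : Set V :=
  {x ∈ A | interval G u x ∩ A = {x}}

end Mediangle

/-!
Through an isometric embedding `φ` into a hypercube, distances become Hamming distances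
`#(φ u ∆ φ v)`, and `g ∈ [u, v]` as soon as `φ u ∆ φ g` and `φ g ∆ φ v` are disjoint. The four
vertices of a 4-cycle are sent onto a 2-dimensional subcube `{φ a ∆ T | T ⊆ {e, f}}`, and the
gate of `u` is the vertex of the cycle that agrees with `u` on the two coordinates `e` and `f`.
-/

namespace Mediangle

open Finset
open scoped symmDiff

section Hypercube

variable {U : Type} [DecidableEq U]

lemma cubeGraph_adj_iff {A B : Finset U} : (cubeGraph U).Adj A B ↔ ∃ e, A ∆ B = {e} := by
  simp only [cubeGraph, ← coe_symmDiff, ← coe_singleton, coe_inj]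

lemma card_symmDiff_le_length {A B : Finset U} (p : (cubeGraph U).Walk A B) :
    #(A ∆ B) ≤ p.length := by
  induction p with
  | nil => simp
  | @cons A C B hAC p ih =>
    obtain ⟨e, he⟩ := cubeGraph_adj_iff.mp hAC
    calc #(A ∆ B) ≤ #(A ∆ C ∪ C ∆ B) := card_le_card (symmDiff_triangle A C B)
      _ ≤ #(A ∆ C) + #(C ∆ B) := card_union_le _ _
      _ ≤ (Walk.cons hAC p).length := by
        rw [he, card_singleton, Walk.length_cons]
        omega

lemma exists_walk_length_eq_card_symmDiff (A B : Finset U) :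
    ∃ p : (cubeGraph U).Walk A B, p.length = #(A ∆ B) := by
  suffices ∀ D, ∃ p : (cubeGraph U).Walk A (A ∆ D), p.length = #D by
    obtain ⟨p, hp⟩ := this (A ∆ B)
    exact ⟨p.copy rfl (symmDiff_symmDiff_cancel_left A B), by simpa using hp⟩
  intro D
  induction D using Finset.induction_on with
  | empty => exact ⟨Walk.nil.copy rfl (symmDiff_bot A).symm, by simp⟩
  | insert e D he ih =>
    obtain ⟨p, hp⟩ := ih
    have hadj : (cubeGraph U).Adj (A ∆ D) (A ∆ insert e D) := by
      refine cubeGraph_adj_iff.mpr ⟨e, ?_⟩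
      rw [symmDiff_symmDiff_symmDiff_comm, symmDiff_self, bot_symmDiff]
      ext x
      simp only [mem_symmDiff, mem_insert, mem_singleton]
      grind
    exact ⟨p.concat hadj, by simp [hp, card_insert_of_notMem he]⟩

theorem cubeGraph_dist (A B : Finset U) : (cubeGraph U).dist A B = #(A ∆ B) := by
  obtain ⟨p, hp⟩ := exists_walk_length_eq_card_symmDiff A B
  obtain ⟨q, hq⟩ := Reachable.exists_walk_length_eq_dist ⟨p⟩
  exact le_antisymm (hp ▸ dist_le p) (hq ▸ card_symmDiff_le_length q)

end Hypercube

lemma card_symmDiff_add_card_symmDiff_of_disjoint {U : Type*} [DecidableEq U]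
    {A B C : Finset U} (h : Disjoint (A ∆ B) (B ∆ C)) : #(A ∆ B) + #(B ∆ C) = #(A ∆ C) := by
  rw [← card_union_of_disjoint h, ← symmDiff_eq_union h, symmDiff_assoc,
    symmDiff_symmDiff_cancel_left]

lemma eq_of_singleton_symmDiff_singleton_eq {U : Type*} [DecidableEq U] {e f g h : U}
    (hef : e ≠ f) (heg : e ≠ g) (H : {e} ∆ {f} = ({g} ∆ {h} : Finset U)) : f = g := by
  have he := Finset.ext_iff.mp H e
  have hf := Finset.ext_iff.mp H f
  simp only [mem_symmDiff, mem_singleton] at he hf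
  grind

section IsometricEmbedding

variable {V U : Type*} [DecidableEq U] {G : SimpleGraph V} {φ : V → Finset U}
  (hφ : ∀ u v, G.dist u v = #(φ u ∆ φ v))
include hφ

lemma mem_interval_of_disjoint {u g v : V} (h : Disjoint (φ u ∆ φ g) (φ g ∆ φ v)) :
    g ∈ interval G u v := by
  simp only [interval, Set.mem_ofPred_eq, hφ]
  exact card_symmDiff_add_card_symmDiff_of_disjoint h

lemma isGated_of_maps_onto_subcube {A : Set V} {a : V} {S : Finset U}
    (hA : ∀ x ∈ A, φ a ∆ φ x ⊆ S) (hS : ∀ T ⊆ S, ∃ x ∈ A, φ x = φ a ∆ T) : IsGated G A := by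
  intro u
  obtain ⟨g, hgA, hg⟩ := hS (S ∩ (φ a ∆ φ u)) inter_subset_left
  refine ⟨g, hgA, fun v hv => mem_interval_of_disjoint hφ ?_⟩
  have hug : Disjoint (φ u ∆ φ g) S := by
    rw [hg, Finset.disjoint_left]
    intro x
    simp only [mem_symmDiff, mem_inter]
    tauto
  have hgv : φ g ∆ φ v ⊆ S := fun x hx => by
    rcases mem_union.mp (symmDiff_triangle (φ g) (φ a) (φ v) hx) with hx | hx
    · exact hA g hgA (symmDiff_comm (φ g) (φ a) ▸ hx)
    · exact hA v hv hx
  exact hug.mono_right hgv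

lemma exists_symmDiff_eq_singleton_of_adj {x y : V} (h : G.Adj x y) :
    ∃ e, φ x ∆ φ y = {e} :=
  card_eq_one.mp (by rw [← hφ]; exact dist_eq_one_iff_adj.mpr h)

lemma apply_ne_apply_of_reachable {x y : V} (hr : G.Reachable x y) (hne : x ≠ y) : φ x ≠ φ y := by
  intro h
  apply hne
  rw [← hr.dist_eq_zero_iff, hφ, h, symmDiff_self]
  rfl

lemma exists_symmDiff_pair_of_square {a b c d : V} (hab : G.Adj a b) (hbc : G.Adj b c)
    (hcd : G.Adj c d) (hda : G.Adj d a) (hac : a ≠ c) (hbd : b ≠ d) :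
    ∃ e f, e ≠ f ∧ φ b = φ a ∆ {e} ∧ φ d = φ a ∆ {f} ∧ φ c = φ a ∆ {e, f} := by
  obtain ⟨e, he⟩ := exists_symmDiff_eq_singleton_of_adj hφ hab
  obtain ⟨e', he'⟩ := exists_symmDiff_eq_singleton_of_adj hφ hbc
  obtain ⟨f, hf⟩ := exists_symmDiff_eq_singleton_of_adj hφ hda.symm
  obtain ⟨f', hf'⟩ := exists_symmDiff_eq_singleton_of_adj hφ hcd.symm
  have hb : φ b = φ a ∆ {e} := by rw [← he, symmDiff_symmDiff_cancel_left]
  have hd : φ d = φ a ∆ {f} := by rw [← hf, symmDiff_symmDiff_cancel_left]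
  have hcb : φ c = φ a ∆ {e} ∆ {e'} := by rw [← hb, ← he', symmDiff_symmDiff_cancel_left]
  have hcd' : φ c = φ a ∆ {f} ∆ {f'} := by rw [← hd, ← hf', symmDiff_symmDiff_cancel_left]
  have hef : e ≠ f := by
    rintro rfl
    exact apply_ne_apply_of_reachable hφ (hab.symm.reachable.trans hda.symm.reachable) hbd
      (hb.trans hd.symm)
  have hee' : e ≠ e' := by
    rintro rfl
    exact apply_ne_apply_of_reachable hφ (hab.reachable.trans hbc.reachable) hac
      (by rw [hcb, symmDiff_symmDiff_cancel_right])
  have he'f : e' = f := by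
    refine eq_of_singleton_symmDiff_singleton_eq (h := f') hee' hef ?_
    rwa [hcb, symmDiff_assoc, symmDiff_assoc, symmDiff_right_inj] at hcd'
  refine ⟨e, f, hef, hb, hd, ?_⟩
  rw [hcb, he'f, symmDiff_assoc, symmDiff_eq_union (disjoint_singleton.mpr hef), insert_eq]

lemma isGated_square {a b c d : V} (hab : G.Adj a b) (hbc : G.Adj b c) (hcd : G.Adj c d)
    (hda : G.Adj d a) (hac : a ≠ c) (hbd : b ≠ d) : IsGated G {a, b, c, d} := by
  obtain ⟨e, f, hef, hb, hd, hc⟩ := exists_symmDiff_pair_of_square hφ hab hbc hcd hda hac hbd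
  refine isGated_of_maps_onto_subcube hφ (a := a) (S := {e, f}) ?_ ?_
  · rintro v (rfl | rfl | rfl | rfl) <;>
      simp [hb, hc, hd, symmDiff_symmDiff_cancel_left, subset_iff]
  · intro T hT
    have hT' : (T : Set U) ⊆ {e, f} := by rw [← coe_pair]; exact coe_subset.mpr hT
    rcases Set.subset_pair_iff_eq.mp hT' with
      hT | hT | hT | hT <;> norm_cast at hT <;> subst hT
    · exact ⟨a, by simp, (symmDiff_bot _).symm⟩
    · exact ⟨b, by simp, hb⟩
    · exact ⟨d, by simp, hd⟩
    · exact ⟨c, by simp, hc⟩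

end IsometricEmbedding

lemma exists_square_of_isCycle_of_length_eq_four {V : Type*} {G : SimpleGraph V} {a : V}
    (c : G.Walk a a) (hc : c.IsCycle) (hlen : c.length = 4) :
    ∃ b x d, G.Adj a b ∧ G.Adj b x ∧ G.Adj x d ∧ G.Adj d a ∧ a ≠ x ∧ b ≠ d ∧
      {v | v ∈ c.support} = {a, b, x, d} := by
  rcases c with _ | ⟨hab, _ | ⟨hbx, _ | ⟨hxd, _ | ⟨hda, _ | ⟨_, _⟩⟩⟩⟩⟩ <;>
    simp only [Walk.length_cons, Walk.length_nil] at hlen <;> try omega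
  have hnd := hc.support_nodup
  simp only [Walk.support_cons, Walk.support_nil, List.tail_cons, List.nodup_cons,
    List.mem_cons, List.not_mem_nil] at hnd
  refine ⟨_, _, _, hab, hbx, hxd, hda, by tauto, by tauto, ?_⟩
  ext v
  simp only [Set.mem_ofPred_eq, Set.mem_insert_iff, Set.mem_singleton_iff, Walk.support_cons,
    Walk.support_nil, List.mem_cons, List.not_mem_nil]
  tauto

/-- In a partial cube, the vertex set of every 4-cycle is gated. -/
theorem fourCycle_isGated_of_partialCube {V : Type*} (G : SimpleGraph V)
    (hpc : IsPartialCube G) {a : V} (c : G.Walk a a) (hc : c.IsCycle)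
    (hlen : c.length = 4) :
    IsGated G {v | v ∈ c.support} := by
  classical
  obtain ⟨-, U, φ, hφ⟩ := hpc
  obtain ⟨b, x, d, hab, hbx, hxd, hda, hax, hbd, hsupp⟩ :=
    exists_square_of_isCycle_of_length_eq_four c hc hlen
  rw [hsupp]
  exact isGated_square (fun u v => by rw [← hφ, cubeGraph_dist]) hab hbx hxd hda hax hbd

end Mediangle
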